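/- arXiv:2310.17455 — 3 statements merged into one kernel-verified Lean document; each statement's English description precedes it below -/
import Mathlib

section
/- Let X be a finite set with |X| = K, let d be a metric on X, and let μ and ν be probability distributions supported on X. Suppose there exists k ∈ X such that μ(i) ≤ ν(i) for every i ≠ k. Then the optimal transport cost with cost matrix C_{ij} = d(i,j) satisfies W(μ, ν) = Σ_{i ∈ X} d(i,k)·(ν(i) − μ(i)). -/
open Finset

/-- Let `X` be a finite set with `|X| = K`, `d` a metric on `X`, and `μ, ν`
probability distributions on `X`. If there is `k` with `μ i ≤ ν i` for all `i ≠ k`, then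
the optimal transport cost with cost matrix `C i j = d i j` equals
`∑ i, d i k * (ν i - μ i)`. -/
theorem stmt2 {X : Type*} [Fintype X] (K : ℕ) (hK : Fintype.card X = K)
    (d : X → X → ℝ)
    (hd_self : ∀ i, d i i = 0)
    (hd_symm : ∀ i j, d i j = d j i)
    (hd_pos : ∀ i j, i ≠ j → 0 < d i j)
    (hd_tri : ∀ i j l, d i l ≤ d i j + d j l)
    (μ ν : X → ℝ)
    (hμ0 : ∀ i, 0 ≤ μ i) (hν0 : ∀ i, 0 ≤ ν i)
    (hμ1 : ∑ i, μ i = 1) (hν1 : ∑ i, ν i = 1)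
    (k : X) (hk : ∀ i, i ≠ k → μ i ≤ ν i) :
    IsLeast
      {cost : ℝ | ∃ T : X → X → ℝ,
        (∀ i j, 0 ≤ T i j) ∧
        (∀ i, ∑ j, T i j = μ i) ∧
        (∀ j, ∑ i, T i j = ν j) ∧
        cost = ∑ i, ∑ j, d i j * T i j}
      (∑ i, d i k * (ν i - μ i)) := by
  classical
  have hμe : μ k + ∑ j ∈ univ.erase k, μ j = 1 := by
    rw [Finset.add_sum_erase _ _ (Finset.mem_univ k)]; exact hμ1
  have hνe : ν k + ∑ j ∈ univ.erase k, ν j = 1 := by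
    rw [Finset.add_sum_erase _ _ (Finset.mem_univ k)]; exact hν1
  set T : X → X → ℝ := fun i j =>
    if i = j then (if i = k then ν k else μ i)
    else (if i = k then ν j - μ j else 0) with hT
  constructor
  · refine ⟨T, ?_, ?_, ?_, ?_⟩
    · intro i j
      rw [hT]
      dsimp only
      split_ifs with h1 h2 h2
      · exact hν0 k
      · exact hμ0 i
      · have hj : j ≠ k := fun hj => h1 (h2.trans hj.symm)
        linarith [hk j hj]
      · exact le_rfl
    · intro i
      by_cases hik : i = k
      · have hptw : ∀ j, T i j = if j = k then ν k else ν j - μ j := by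
          intro j
          rw [hT]
          dsimp only
          by_cases h : j = k
          · rw [if_pos h, if_pos (by rw [hik, h]), if_pos hik]
          · rw [if_neg (by rw [hik]; exact fun hh => h hh.symm), if_pos hik, if_neg h]
        calc ∑ j, T i j = ∑ j, (if j = k then ν k else ν j - μ j) := by
              exact Finset.sum_congr rfl fun j _ => hptw j
          _ = ν k + ∑ j ∈ univ.erase k, (ν j - μ j) := by
              rw [← Finset.add_sum_erase _ _ (Finset.mem_univ k), if_pos rfl]
              congr 1
              exact Finset.sum_congr rfl fun j hj => if_neg (Finset.ne_of_mem_erase hj)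
          _ = μ i := by
              rw [Finset.sum_sub_distrib, hik]
              linarith
      · have hptw : ∀ j, T i j = if j = i then μ i else 0 := by
          intro j
          rw [hT]
          dsimp only
          by_cases h : i = j
          · rw [if_pos h, if_neg hik, if_pos h.symm]
          · rw [if_neg h, if_neg hik, if_neg (fun hh => h hh.symm)]
        rw [Finset.sum_congr rfl fun j _ => hptw j,
          Finset.sum_ite_eq' univ i, if_pos (Finset.mem_univ i)]
    · intro j
      by_cases hjk : j = k
      · have hptw : ∀ i, T i j = if i = k then ν k else 0 := by
          intro i
          rw [hT]
          dsimp only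
          by_cases h : i = k
          · rw [if_pos (h.trans hjk.symm), if_pos h, if_pos h]
          · rw [if_neg (by rw [hjk]; exact h), if_neg h, if_neg h]
        rw [Finset.sum_congr rfl fun i _ => hptw i,
          Finset.sum_ite_eq' univ k, if_pos (Finset.mem_univ k), hjk]
      · have hptw : ∀ i, T i j = (if i = j then μ j else 0) + (if i = k then ν j - μ j else 0) := by
          intro i
          rw [hT]
          dsimp only
          by_cases h : i = j
          · rw [if_pos h, if_pos h, if_neg (h.symm ▸ hjk), if_neg (h.symm ▸ hjk), h, add_zero]
          · rw [if_neg h, if_neg h, zero_add]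
        rw [Finset.sum_congr rfl fun i _ => hptw i, Finset.sum_add_distrib,
          Finset.sum_ite_eq' univ j, if_pos (Finset.mem_univ j),
          Finset.sum_ite_eq' univ k, if_pos (Finset.mem_univ k)]
        ring
    · have hrow : ∀ i, ∑ j, d i j * T i j =
          (if i = k then ∑ j, d k j * (ν j - μ j) else 0) := by
        intro i
        by_cases hik : i = k
        · rw [if_pos hik]
          refine Finset.sum_congr rfl fun j _ => ?_
          rw [hT]
          dsimp only
          by_cases h : i = j
          · rw [if_pos h, ← h, ← hik, hd_self, zero_mul, zero_mul]
          · rw [if_neg h, if_pos hik, hik]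
        · rw [if_neg hik]
          refine Finset.sum_eq_zero fun j _ => ?_
          rw [hT]
          dsimp only
          by_cases h : i = j
          · rw [if_pos h, ← h, hd_self, zero_mul]
          · rw [if_neg h, if_neg hik, mul_zero]
      rw [Finset.sum_congr rfl fun i _ => hrow i,
        Finset.sum_ite_eq' univ k, if_pos (Finset.mem_univ k)]
      exact Finset.sum_congr rfl fun j _ => by rw [hd_symm k j]
  · rintro x ⟨S, hS0, hrowS, hcolS, rfl⟩
    have key : ∀ i j, (d j k - d i k) * S i j ≤ d i j * S i j := by
      intro i j
      apply mul_le_mul_of_nonneg_right _ (hS0 i j)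
      have := hd_tri j i k
      rw [hd_symm j i] at this
      linarith
    have h1 : ∑ i, ∑ j, d j k * S i j = ∑ j, d j k * ν j := by
      rw [Finset.sum_comm]
      exact Finset.sum_congr rfl fun j _ => by rw [← hcolS j, Finset.mul_sum]
    have h2 : ∑ i, ∑ j, d i k * S i j = ∑ i, d i k * μ i :=
      Finset.sum_congr rfl fun i _ => by rw [← hrowS i, Finset.mul_sum]
    calc ∑ i, d i k * (ν i - μ i)
        = ∑ i, ∑ j, (d j k - d i k) * S i j := by
          simp only [sub_mul, Finset.sum_sub_distrib, h1, h2, mul_sub]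
      _ ≤ ∑ i, ∑ j, d i j * S i j :=
          Finset.sum_le_sum fun i _ => Finset.sum_le_sum fun j _ => key i j
end

section
/- Let B ≥ 1, λ > 0, c ≥ 0, and a_1, …, a_B ≥ 0. Set μ = (1/B)·1_B, let T̄ = (1/B)·I_B, and define the cost matrix C by C_{ii} = a_i and C_{ij} = c + a_i for j ≠ i. Then over the set U(μ) = { T ∈ ℝ_{+}^{B×B} : T·1_B = μ }, the objective KL(T̄ ‖ T) + λ·⟨C, T⟩ is uniquely minimized at T = (1/B)·I_B, and its minimum value is (λ/B)·Σ_{i=1}^B a_i. -/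
open Finset

/-- The generalized KL divergence between two nonnegative matrices, valued in `EReal`:
`KL(P‖Q) = Σ P log(P/Q) - Σ P + Σ Q` with the conventions `0·log 0 = 0` and
`KL = +∞` if some `Q_{ij} = 0` while `P_{ij} > 0`. -/
noncomputable def genKLE {B : ℕ} (P Q : Fin B → Fin B → ℝ) : EReal :=
  if ∃ i j, 0 < P i j ∧ Q i j = 0 then ⊤
  else (((∑ i, ∑ j, P i j * Real.log (P i j / Q i j))
          - (∑ i, ∑ j, P i j) + (∑ i, ∑ j, Q i j) : ℝ) : EReal)

/-- The objective `KL(T̄ ‖ T) + λ·⟨C, T⟩` with `T̄ = (1/B)·I_B`,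
`C_{ii} = a_i` and `C_{ij} = c + a_i` for `j ≠ i`. -/
noncomputable def obj8 (B : ℕ) (lam c : ℝ) (a : Fin B → ℝ)
    (T : Fin B → Fin B → ℝ) : EReal :=
  genKLE (fun i j => if i = j then 1 / (B : ℝ) else 0) T
    + ((lam * ∑ i, ∑ j, (if i = j then a i else c + a i) * T i j : ℝ) : EReal)

/-- Over `U(μ) = {T ∈ ℝ₊^{B×B} : T·1_B = (1/B)·1_B}`, the objective
`KL(T̄ ‖ T) + λ·⟨C, T⟩` is uniquely minimized at `T = (1/B)·I_B`, with minimum value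
`(λ/B)·Σ_i a_i`. -/
theorem stmt8 (B : ℕ) (hB : 1 ≤ B) (lam c : ℝ) (hlam : 0 < lam) (hc : 0 ≤ c)
    (a : Fin B → ℝ) (ha : ∀ i, 0 ≤ a i) :
    obj8 B lam c a (fun i j => if i = j then 1 / (B : ℝ) else 0)
        = (((lam / (B : ℝ)) * ∑ i, a i : ℝ) : EReal) ∧
    (∀ T : Fin B → Fin B → ℝ,
      (∀ i j, 0 ≤ T i j) → (∀ i, ∑ j, T i j = 1 / (B : ℝ)) →
      T ≠ (fun i j => if i = j then 1 / (B : ℝ) else 0) →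
      obj8 B lam c a (fun i j => if i = j then 1 / (B : ℝ) else 0) < obj8 B lam c a T) := by
  have hB0 : (0:ℝ) < B := by exact_mod_cast hB
  have hBinv : (0:ℝ) < 1 / B := by positivity
  set Tb : Fin B → Fin B → ℝ := fun i j => if i = j then 1 / (B : ℝ) else 0 with hTbdef
  -- the cost at Tb
  have hCostb : ∑ i, ∑ j, (if i = j then a i else c + a i) * Tb i j = (∑ i, a i) / B := by
    rw [Finset.sum_div]
    refine Finset.sum_congr rfl fun i _ => ?_
    rw [Finset.sum_eq_single i]
    · simp [Tb, div_eq_mul_inv, mul_comm]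
    · intro j _ hji
      simp [Tb, Ne.symm hji]
    · simp
  -- KL at Tb is 0
  have hKLb : genKLE Tb Tb = ((0:ℝ) : EReal) := by
    rw [genKLE, if_neg]
    · have h1 : ∑ i, ∑ j, Tb i j * Real.log (Tb i j / Tb i j) = 0 := by
        refine Finset.sum_eq_zero fun i _ => Finset.sum_eq_zero fun j _ => ?_
        by_cases h : i = j
        · subst h
          have hd : Tb i i ≠ 0 := by simp [Tb]; omega
          rw [div_self hd, Real.log_one, mul_zero]
        · simp [Tb, h]
      rw [h1]
      norm_num
    · rintro ⟨i, j, h1, h2⟩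
      rw [h2] at h1
      exact lt_irrefl _ h1
  have hobjb : obj8 B lam c a Tb = (((lam / (B : ℝ)) * ∑ i, a i : ℝ) : EReal) := by
    rw [obj8, hKLb, hCostb, ← EReal.coe_add]
    congr 1
    ring
  refine ⟨hobjb, ?_⟩
  intro T hT hrow hne
  rw [hobjb]
  by_cases hz : ∃ i, T i i = 0
  · -- KL is +∞
    obtain ⟨i, hi⟩ := hz
    have hKL : genKLE Tb T = ⊤ := by
      rw [genKLE, if_pos]
      exact ⟨i, i, by simp [Tb]; omega, hi⟩
    rw [obj8, hKL, EReal.top_add_coe]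
    exact EReal.coe_lt_top _
  · push_neg at hz
    have hpos : ∀ i, 0 < T i i := fun i => (hT i i).lt_of_ne (fun h => hz i h.symm)
    have hle : ∀ i, T i i ≤ 1 / B := by
      intro i
      rw [← hrow i]
      exact Finset.single_le_sum (fun j _ => hT i j) (Finset.mem_univ i)
    -- KL at T is finite
    have hKL : genKLE Tb T
        = ((∑ i, (1 / (B:ℝ)) * Real.log ((1 / (B:ℝ)) / T i i) - 1 + 1 : ℝ) : EReal) := by
      rw [genKLE, if_neg]
      · congr 1
        norm_cast
        have h1 : ∑ i, ∑ j, Tb i j * Real.log (Tb i j / T i j)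
            = ∑ i, (1 / (B:ℝ)) * Real.log ((1 / (B:ℝ)) / T i i) := by
          refine Finset.sum_congr rfl fun i _ => ?_
          rw [Finset.sum_eq_single i]
          · simp [Tb]
          · intro j _ hji; simp [Tb, Ne.symm hji]
          · simp
        have h2 : ∑ i, ∑ j, Tb i j = 1 := by
          have : ∀ i : Fin B, ∑ j, Tb i j = 1 / B := by
            intro i; simp [Tb, Finset.sum_ite_eq]
          rw [Finset.sum_congr rfl fun i _ => this i]
          simp
          field_simp
        have h3 : ∑ i, ∑ j, T i j = 1 := by
          rw [Finset.sum_congr rfl fun i _ => hrow i]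
          simp
          field_simp
        rw [h1, h2, h3]
      · rintro ⟨i, j, h1, h2⟩
        by_cases h : i = j
        · subst h; exact (hpos i).ne' h2
        · simp [Tb, h] at h1
    -- cost at T
    have hcost : ∑ i, ∑ j, (if i = j then a i else c + a i) * T i j
        = (∑ i, a i) / B + c * ∑ i, (1 / (B:ℝ) - T i i) := by
      have h1 : ∀ i : Fin B, ∑ j, (if i = j then a i else c + a i) * T i j
          = a i / B + c * (1 / (B:ℝ) - T i i) := by
        intro i
        have he : ∀ j, (if i = j then a i else c + a i) * T i j
            = a i * T i j + (c * T i j - (if i = j then c * T i j else 0)) := by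
          intro j; by_cases h : i = j <;> simp [h] <;> ring
        rw [Finset.sum_congr rfl fun j _ => he j, Finset.sum_add_distrib,
          Finset.sum_sub_distrib, ← Finset.mul_sum, ← Finset.mul_sum, hrow i,
          Finset.sum_ite_eq]
        simp
        ring
      rw [Finset.sum_congr rfl fun i _ => h1 i, Finset.sum_add_distrib, ← Finset.mul_sum,
        ← Finset.sum_div]
    -- the key positivity
    have key : (0:ℝ) < ∑ i, ((1 / (B:ℝ)) * Real.log ((1 / (B:ℝ)) / T i i)
        + lam * c * (1 / (B:ℝ) - T i i)) := by
      obtain ⟨i0, hi0⟩ : ∃ i, T i i ≠ 1 / B := by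
        by_contra h
        push_neg at h
        apply hne
        funext i j
        by_cases hij : i = j
        · subst hij; simpa [Tb] using h i
        · have hsum0 : ∑ k ∈ Finset.univ.erase i, T i k = 0 := by
            have := Finset.sum_erase_add Finset.univ (T i) (Finset.mem_univ i)
            rw [hrow i] at this
            rw [h i] at this
            linarith
          have : T i j = 0 := by
            have := (Finset.sum_eq_zero_iff_of_nonneg
              (fun k _ => hT i k)).mp hsum0 j (by simp [Ne.symm hij])
            exact this
          simpa [Tb, hij] using this
      have hlt : T i0 i0 < 1 / B := lt_of_le_of_ne (hle i0) hi0
      refine Finset.sum_pos' (fun i _ => ?_) ⟨i0, Finset.mem_univ i0, ?_⟩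
      · have hlog : 0 ≤ Real.log ((1 / (B:ℝ)) / T i i) :=
          Real.log_nonneg ((one_le_div (hpos i)).mpr (hle i))
        have := hle i
        have : 0 ≤ lam * c * (1 / (B:ℝ) - T i i) := by
          apply mul_nonneg (mul_nonneg hlam.le hc); linarith
        positivity
      · have hlog : 0 < Real.log ((1 / (B:ℝ)) / T i0 i0) :=
          Real.log_pos ((one_lt_div (hpos i0)).mpr hlt)
        have h2 : 0 ≤ lam * c * (1 / (B:ℝ) - T i0 i0) := by
          apply mul_nonneg (mul_nonneg hlam.le hc); linarith
        nlinarith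
    rw [obj8, hKL, ← EReal.coe_add, EReal.coe_lt_coe_iff, hcost]
    rw [Finset.sum_add_distrib] at key
    have hms : ∑ i, lam * c * (1 / (B:ℝ) - T i i) = lam * c * ∑ i, (1 / (B:ℝ) - T i i) := by
      rw [Finset.mul_sum]
    rw [hms] at key
    have hring : lam * ((∑ i, a i) / B + c * ∑ i, (1 / (B:ℝ) - T i i))
        = lam / B * ∑ i, a i + lam * c * ∑ i, (1 / (B:ℝ) - T i i) := by ring
    linarith [key, hring]
end

section
/- Let B ≥ 1, ε > 0, and let u_1, …, u_B, v_1, …, v_B ∈ ℝ^d be unit vectors. Define the cost matrix C_{ij} = ‖u_i − v_j‖₂², the matching matrix T^θ_{ij} = (1/B)·exp(−C_{ij}/ε) / Σ_{k=1}^B exp(−C_{ik}/ε), and the ground-truth matrix T̄ = (1/B)·I_B. Then KL(T̄ ‖ T^θ) = −(1/B)·Σ_{i=1}^B log [ exp(2⟨u_i, v_i⟩/ε) / Σ_{k=1}^B exp(2⟨u_i, v_k⟩/ε) ], i.e. the inverse-optimal-transport loss equals the contrastive (CLIP image-to-text) loss with temperature ε/2. -/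
open Finset
open scoped RealInnerProductSpace

/-- The generalized KL divergence between two nonnegative matrices,
`KL(P‖Q) = Σ P log(P/Q) - Σ P + Σ Q` (with the convention `0·log 0 = 0`,
which holds here since `P i j = 0` annihilates its term). -/
noncomputable def genKL9 {B : ℕ} (P Q : Fin B → Fin B → ℝ) : ℝ :=
  (∑ i, ∑ j, P i j * Real.log (P i j / Q i j))
    - (∑ i, ∑ j, P i j) + (∑ i, ∑ j, Q i j)

/-- For unit vectors `u_i, v_j`, cost `C_{ij} = ‖u_i - v_j‖²`, matching matrix
`T^θ_{ij} = (1/B)·exp(-C_{ij}/ε)/Σ_k exp(-C_{ik}/ε)` and ground truth `T̄ = (1/B)·I_B`,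
the inverse-optimal-transport loss `KL(T̄ ‖ T^θ)` equals the contrastive (CLIP
image-to-text) loss with temperature `ε/2`. -/
theorem stmt9 (B d : ℕ) (hB : 1 ≤ B) (ε : ℝ) (hε : 0 < ε)
    (u v : Fin B → EuclideanSpace ℝ (Fin d))
    (hu : ∀ i, ‖u i‖ = 1) (hv : ∀ j, ‖v j‖ = 1) :
    genKL9 (fun i j => if i = j then 1 / (B : ℝ) else 0)
        (fun i j => (1 / (B : ℝ)) * Real.exp (-(‖u i - v j‖ ^ 2) / ε)
          / ∑ k, Real.exp (-(‖u i - v k‖ ^ 2) / ε))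
      = -(1 / (B : ℝ)) * ∑ i,
          Real.log (Real.exp (2 * ⟪u i, v i⟫ / ε)
            / ∑ k, Real.exp (2 * ⟪u i, v k⟫ / ε)) := by
  have hB0 : (0:ℝ) < B := by exact_mod_cast Nat.lt_of_lt_of_le Nat.zero_lt_one hB
  set E : Fin B → Fin B → ℝ := fun i j => Real.exp (-(‖u i - v j‖ ^ 2) / ε) with hE
  set S : Fin B → ℝ := fun i => ∑ k, Real.exp (2 * ⟪u i, v k⟫ / ε) with hS
  have hexp : ∀ i j, E i j = Real.exp (-2/ε) * Real.exp (2 * ⟪u i, v j⟫ / ε) := by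
    intro i j
    have hnorm : ‖u i - v j‖ ^ 2 = 2 - 2 * ⟪u i, v j⟫ := by
      rw [norm_sub_sq_real, hu i, hv j]; ring
    rw [hE]; simp only
    rw [hnorm, ← Real.exp_add]
    congr 1; ring
  have hEsum : ∀ i, ∑ k, E i k = Real.exp (-2/ε) * S i := by
    intro i
    rw [hS]; simp only [mul_sum]
    exact Finset.sum_congr rfl fun k _ => hexp i k
  have hSpos : ∀ i, 0 < S i :=
    fun i => Finset.sum_pos (fun k _ => Real.exp_pos _)
      (Finset.univ_nonempty_iff.2 ⟨⟨0, Nat.lt_of_lt_of_le Nat.zero_lt_one hB⟩⟩)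
  have hDpos : ∀ i, 0 < ∑ k, E i k := fun i => by
    rw [hEsum]; exact mul_pos (Real.exp_pos _) (hSpos i)
  have hQ : ∀ i j, (1 / (B:ℝ)) * E i j / ∑ k, E i k
      = (1 / (B:ℝ)) * Real.exp (2 * ⟪u i, v j⟫ / ε) / S i := by
    intro i j
    rw [hexp i j, hEsum i,
      show (1 / (B:ℝ)) * (Real.exp (-2/ε) * Real.exp (2 * ⟪u i, v j⟫ / ε))
          = Real.exp (-2/ε) * ((1 / (B:ℝ)) * Real.exp (2 * ⟪u i, v j⟫ / ε)) from by ring,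
      mul_div_mul_left _ _ (Real.exp_ne_zero _)]
  unfold genKL9
  have hsumQ : (∑ i, ∑ j, (1 / (B : ℝ)) * E i j / ∑ k, E i k) = 1 := by
    have : ∀ i : Fin B, (∑ j, (1 / (B : ℝ)) * E i j / ∑ k, E i k) = 1 / B := by
      intro i
      rw [← Finset.sum_div, ← Finset.mul_sum, mul_div_assoc,
        div_self (hDpos i).ne', mul_one]
    rw [Finset.sum_congr rfl fun i _ => this i]
    simp
    field_simp
  have hsumP : (∑ i : Fin B, ∑ j : Fin B, (if i = j then 1 / (B : ℝ) else 0)) = 1 := by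
    have : ∀ i : Fin B, (∑ j : Fin B, (if i = j then 1 / (B : ℝ) else 0)) = 1 / B := by
      intro i; rw [Finset.sum_ite_eq]; simp
    rw [Finset.sum_congr rfl fun i _ => this i]
    simp
    field_simp
  have hterm1 : (∑ i : Fin B, ∑ j : Fin B,
      (if i = j then 1 / (B : ℝ) else 0) *
        Real.log ((if i = j then 1 / (B : ℝ) else 0) / ((1 / (B:ℝ)) * E i j / ∑ k, E i k)))
      = -(1 / (B : ℝ)) * ∑ i, Real.log (Real.exp (2 * ⟪u i, v i⟫ / ε) / S i) := by
    have step : ∀ i : Fin B, (∑ j : Fin B,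
        (if i = j then 1 / (B : ℝ) else 0) *
          Real.log ((if i = j then 1 / (B : ℝ) else 0) / ((1 / (B:ℝ)) * E i j / ∑ k, E i k)))
        = -(1 / (B : ℝ)) * Real.log (Real.exp (2 * ⟪u i, v i⟫ / ε) / S i) := by
      intro i
      rw [Finset.sum_eq_single i]
      · simp only [eq_self_iff_true, if_true]
        rw [hQ i i]
        have h1 : (1 / (B:ℝ)) / ((1 / (B:ℝ)) * Real.exp (2 * ⟪u i, v i⟫ / ε) / S i)
            = (Real.exp (2 * ⟪u i, v i⟫ / ε) / S i)⁻¹ := by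
          field_simp
        rw [h1, Real.log_inv]
        ring
      · intro j _ hji
        rw [if_neg (Ne.symm hji)]
        simp
      · intro h; exact absurd (Finset.mem_univ i) h
    rw [Finset.sum_congr rfl fun i _ => step i, ← Finset.mul_sum]
  rw [hterm1, hsumP, hsumQ]
  ring
end
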